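/- Let α ∈ (1,2) and 0 < ε < 1/2. There exists a constant c depending only on α (not on ε or v) such that for every v ∈ (1−ε, 1), ∫_v^1 (1−r^α)^{−1/α}(r^α−v^α)^{−1/α} dr ≤ c · ε^{(α−1)/α} · (1−v^α)^{−1/α}. -/
import Mathlib


open Real MeasureTheory Set


/-- Lower bound on rpow difference via Bernoulli. -/
lemma aux_rpow_sub_lower {α x y : ℝ} (hα1 : 1 < α) (hα2 : α < 2)
    (hx : 1/2 ≤ x) (hxy : x ≤ y) (hy : y ≤ 1) : (y - x)/2 ≤ y ^ α - x ^ α := by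
  have hx0 : (0:ℝ) < x := by linarith
  have hs : (-1:ℝ) ≤ y/x - 1 := by
    have : 0 ≤ y / x := div_nonneg (by linarith) hx0.le
    linarith
  have hB := one_add_mul_self_le_rpow_one_add hs hα1.le
  rw [add_sub_cancel] at hB
  have hdiv : (y/x) ^ α = y ^ α / x ^ α := Real.div_rpow (by linarith) hx0.le α
  have hxapos : (0:ℝ) < x ^ α := Real.rpow_pos_of_pos hx0 α
  have key : x ^ α * (1 + α * (y/x - 1)) ≤ y ^ α := by
    have h2 := mul_le_mul_of_nonneg_left hB hxapos.le
    rw [hdiv, mul_div_cancel₀ _ hxapos.ne'] at h2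
    exact h2
  have hpow : x ^ (α - 1) * x = x ^ α := by
    rw [← Real.rpow_add_one hx0.ne' (α - 1)]
    ring_nf
  have hrw : x ^ α * (1 + α * (y/x - 1)) = x ^ α + α * (x ^ (α-1) * (y - x)) := by
    rw [← hpow]; field_simp
  rw [hrw] at key
  have hx1 : x ≤ 1 := le_trans hxy hy
  have hmono : x ^ (1:ℝ) ≤ x ^ (α - 1) :=
    Real.rpow_le_rpow_of_exponent_ge hx0 hx1 (by linarith)
  rw [Real.rpow_one] at hmono
  have hyx : 0 ≤ y - x := sub_nonneg.mpr hxy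
  have h1 : x * (y - x) ≤ x ^ (α-1) * (y - x) := mul_le_mul_of_nonneg_right hmono hyx
  have h2 : (y - x)/2 ≤ x * (y - x) := by nlinarith
  have h3 : x ^ (α-1) * (y - x) ≤ α * (x ^ (α-1) * (y - x)) :=
    le_mul_of_one_le_left (by nlinarith) hα1.le
  linarith

/-- Upper bound: `1 - v^α ≤ 2(1-v)`. -/
lemma aux_one_sub_rpow_upper {α v : ℝ} (hα1 : 1 < α) (hα2 : α < 2)
    (hv0 : 0 < v) (hv1 : v ≤ 1) : 1 - v ^ α ≤ 2 * (1 - v) := by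
  have hs : (-1:ℝ) ≤ v - 1 := by linarith
  have hB := one_add_mul_self_le_rpow_one_add hs hα1.le
  rw [add_sub_cancel] at hB
  nlinarith

/-- `r^α ≤ r` for `0 < r ≤ 1`, `1 ≤ α`. -/
lemma aux_rpow_le_self {α r : ℝ} (hα : 1 ≤ α) (hr0 : 0 < r) (hr1 : r ≤ 1) :
    r ^ α ≤ r := by
  have := Real.rpow_le_rpow_of_exponent_ge hr0 hr1 hα
  rwa [Real.rpow_one] at this


/-- Beta-type integral estimate (Lemma 4.3 of [MR4105374]): for `α ∈ (1,2)` there is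
`c = c(α)` such that for all `ε ∈ (0,1/2)` and `v ∈ (1−ε,1)`,
`∫_v^1 (1−r^α)^{−1/α}(r^α−v^α)^{−1/α} dr ≤ c ε^{(α−1)/α} (1−v^α)^{−1/α}`. -/
theorem beta_type_integral_estimate (α : ℝ) (hα : α ∈ Set.Ioo (1:ℝ) 2) :
    ∃ c : ℝ, 0 < c ∧ ∀ ε : ℝ, ε ∈ Set.Ioo (0:ℝ) (1/2) → ∀ v : ℝ, v ∈ Set.Ioo (1 - ε) 1 →
      (∫ r in Ioo v 1, (1 - r ^ α) ^ (-(1/α)) * (r ^ α - v ^ α) ^ (-(1/α)))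
        ≤ c * ε ^ ((α - 1)/α) * (1 - v ^ α) ^ (-(1/α)) := by
  obtain ⟨hα1, hα2⟩ := hα
  have hα0 : (0:ℝ) < α := by linarith
  set β : ℝ := 1/α with hβdef
  have hβ0 : 0 < β := by positivity
  have hβ1 : β < 1 := by rw [hβdef, div_lt_one hα0]; linarith
  have h1β : 0 < 1 - β := by linarith
  refine ⟨16 / (1 - β), by positivity, ?_⟩
  intro ε hε v hv
  obtain ⟨hε0, hεh⟩ := hε
  obtain ⟨hv1, hv2⟩ := hv
  have hv0 : (1:ℝ)/2 < v := by linarith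
  have hv0' : (0:ℝ) < v := by linarith
  have hδ0 : (0:ℝ) < 1 - v := by linarith
  have hδε : 1 - v < ε := by linarith
  set δ : ℝ := 1 - v with hδdef
  set m : ℝ := (v + 1)/2 with hmdef
  have hvm : v < m := by rw [hmdef]; linarith
  have hm1 : m < 1 := by rw [hmdef]; linarith
  have hmv : m - v = δ/2 := by rw [hmdef, hδdef]; ring
  have h1m : 1 - m = δ/2 := by rw [hmdef, hδdef]; ring
  have hδ2 : (0:ℝ) < δ/2 := by positivity
  have hvα : v ^ α ≤ v := aux_rpow_le_self hα1.le hv0' hv2.le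
  have h1vα : 0 < 1 - v ^ α := by linarith
  have hexp : (α - 1)/α = 1 - β := by rw [hβdef]; field_simp
  set F : ℝ → ℝ := fun r => (1 - r ^ α) ^ (-β) * (r ^ α - v ^ α) ^ (-β) with hFdef
  have hRHS : 0 ≤ 16/(1-β) * ε ^ ((α-1)/α) * (1 - v ^ α) ^ (-β) := by
    have := Real.rpow_nonneg h1vα.le (-β)
    have h2 := Real.rpow_nonneg hε0.le ((α-1)/α)
    positivity
  have hioo : (∫ r in Ioo v 1, F r) = ∫ r in v..1, F r := by
    rw [intervalIntegral.integral_of_le hv2.le, ← integral_Ioc_eq_integral_Ioo]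
  by_cases hInt : IntervalIntegrable F volume v 1
  swap
  · rw [hioo, intervalIntegral.integral_undef]
    · exact hRHS
    · rwa [intervalIntegrable_iff_integrableOn_Ioc_of_le hv2.le] at *
  -- integrable case
  have hFm1 : IntervalIntegrable F volume v m := by
    apply hInt.mono_set
    rw [uIcc_of_le hvm.le, uIcc_of_le hv2.le]
    exact Icc_subset_Icc le_rfl hm1.le
  have hFm2 : IntervalIntegrable F volume m 1 := by
    apply hInt.mono_set
    rw [uIcc_of_le hm1.le, uIcc_of_le hv2.le]
    exact Icc_subset_Icc hvm.le le_rfl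
  have hneg1 : (-1:ℝ) < -β := by linarith
  -- bounding functions
  set G1 : ℝ → ℝ := fun r => 2 * (δ/2) ^ (-β) * (r - v) ^ (-β) with hG1def
  set G2 : ℝ → ℝ := fun r => 2 * (δ/2) ^ (-β) * (1 - r) ^ (-β) with hG2def
  have hG1int : IntervalIntegrable G1 volume v m := by
    have h := (intervalIntegral.intervalIntegrable_rpow' hneg1 (a := 0) (b := m - v)).comp_sub_right v
    simp only [zero_add, sub_add_cancel] at h
    exact h.const_mul _
  have hG2int : IntervalIntegrable G2 volume m 1 := by
    have h := (intervalIntegral.intervalIntegrable_rpow' hneg1 (a := 1 - m) (b := 0)).comp_sub_left 1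
    simp only [sub_sub_cancel, sub_zero] at h
    exact h.const_mul _
  -- integral values
  have hJ1 : (∫ r in v..m, (r - v) ^ (-β)) = (δ/2) ^ (1-β)/(1-β) := by
    rw [intervalIntegral.integral_comp_sub_right (fun x => x ^ (-β)) v, sub_self,
      integral_rpow (Or.inl hneg1), Real.zero_rpow (by linarith : -β + 1 ≠ 0), hmv]
    rw [show -β + 1 = 1 - β by ring]
    ring
  have hJ2 : (∫ r in m..1, (1 - r) ^ (-β)) = (δ/2) ^ (1-β)/(1-β) := by
    rw [intervalIntegral.integral_comp_sub_left (fun x => x ^ (-β)) 1, sub_self,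
      integral_rpow (Or.inl hneg1), Real.zero_rpow (by linarith : -β + 1 ≠ 0), h1m]
    rw [show -β + 1 = 1 - β by ring]
    ring
  -- pointwise bounds
  have hkey : ∀ r : ℝ, v ≤ r → r ≤ 1 → (r - v)/2 ≤ r ^ α - v ^ α := fun r h1 h2 =>
    aux_rpow_sub_lower hα1 hα2 hv0.le h1 h2
  have hrle : ∀ r : ℝ, v ≤ r → r ≤ 1 → r ^ α ≤ r := fun r h1 h2 =>
    aux_rpow_le_self hα1.le (lt_of_lt_of_le hv0' h1) h2
  have h2β : (2:ℝ) ^ β ≤ 2 := by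
    have := Real.rpow_le_rpow_of_exponent_le (by norm_num : (1:ℝ) ≤ 2) hβ1.le
    rwa [Real.rpow_one] at this
  have hhalfpow : ∀ x : ℝ, 0 ≤ x → (x/2) ^ (-β) ≤ 2 * x ^ (-β) := by
    intro x hx
    rw [Real.div_rpow hx (by norm_num : (0:ℝ) ≤ 2), Real.rpow_neg (by norm_num : (0:ℝ) ≤ 2),
      div_eq_mul_inv, inv_inv]
    calc x ^ (-β) * 2 ^ β ≤ x ^ (-β) * 2 :=
          mul_le_mul_of_nonneg_left h2β (Real.rpow_nonneg hx _)
      _ = 2 * x ^ (-β) := by ring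
  have hb1 : ∀ r ∈ Icc v m, F r ≤ G1 r := by
    rintro r ⟨hr1, hr2⟩
    rcases eq_or_lt_of_le hr1 with rfl | hrv
    · simp [hFdef, hG1def, sub_self, Real.zero_rpow (show -β ≠ 0 by linarith)]
    · have hr01 : r ≤ 1 := le_trans hr2 hm1.le
      have hrα : r ^ α ≤ r := hrle r hr1 hr01
      have hA : (1 - r ^ α) ^ (-β) ≤ (δ/2) ^ (-β) := by
        apply Real.rpow_le_rpow_of_nonpos hδ2 _ (by linarith)
        have : r ≤ m := hr2
        rw [← h1m] at *
        linarith
      have hkey' := hkey r hr1 hr01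
      have hrv2 : 0 < (r - v)/2 := by linarith
      have hB : (r ^ α - v ^ α) ^ (-β) ≤ 2 * (r - v) ^ (-β) := by
        calc (r ^ α - v ^ α) ^ (-β) ≤ ((r - v)/2) ^ (-β) :=
              Real.rpow_le_rpow_of_nonpos hrv2 hkey' (by linarith)
          _ ≤ 2 * (r - v) ^ (-β) := hhalfpow _ (by linarith)
      calc F r ≤ (δ/2) ^ (-β) * (2 * (r - v) ^ (-β)) := by
            apply mul_le_mul hA hB (Real.rpow_nonneg (by linarith) _)
              (Real.rpow_nonneg hδ2.le _)
        _ = G1 r := by rw [hG1def]; ring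
  have hb2 : ∀ r ∈ Icc m 1, F r ≤ G2 r := by
    rintro r ⟨hr1, hr2⟩
    rcases eq_or_lt_of_le hr2 with rfl | hr2'
    · simp [hFdef, hG2def, Real.one_rpow, sub_self,
        Real.zero_rpow (show -β ≠ 0 by linarith)]
    · have hrv : v ≤ r := le_trans hvm.le hr1
      have hrα : r ^ α ≤ r := hrle r hrv hr2
      have hA : (1 - r ^ α) ^ (-β) ≤ (1 - r) ^ (-β) := by
        apply Real.rpow_le_rpow_of_nonpos (by linarith) (by linarith) (by linarith)
      have hkey' := hkey r hrv hr2
      have hrmv : δ/2 ≤ r - v := by rw [← hmv]; linarith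
      have hB : (r ^ α - v ^ α) ^ (-β) ≤ 2 * (δ/2) ^ (-β) := by
        calc (r ^ α - v ^ α) ^ (-β) ≤ ((r - v)/2) ^ (-β) :=
              Real.rpow_le_rpow_of_nonpos (by linarith) hkey' (by linarith)
          _ ≤ 2 * (r - v) ^ (-β) := hhalfpow _ (by linarith)
          _ ≤ 2 * (δ/2) ^ (-β) := by
              have := Real.rpow_le_rpow_of_nonpos hδ2 hrmv (show -β ≤ 0 by linarith)
              linarith
      calc F r ≤ (1 - r) ^ (-β) * (2 * (δ/2) ^ (-β)) := by
            apply mul_le_mul hA hB (Real.rpow_nonneg (by linarith) _)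
              (Real.rpow_nonneg (by linarith) _)
        _ = G2 r := by rw [hG2def]; ring
  -- integrate the bounds
  have hI1 : (∫ r in v..m, F r) ≤ 2 * (δ/2) ^ (-β) * ((δ/2) ^ (1-β)/(1-β)) := by
    calc (∫ r in v..m, F r) ≤ ∫ r in v..m, G1 r :=
          intervalIntegral.integral_mono_on hvm.le hFm1 hG1int hb1
      _ = 2 * (δ/2) ^ (-β) * ∫ r in v..m, (r - v) ^ (-β) := by
          rw [hG1def, intervalIntegral.integral_const_mul]
      _ = 2 * (δ/2) ^ (-β) * ((δ/2) ^ (1-β)/(1-β)) := by rw [hJ1]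
  have hI2 : (∫ r in m..1, F r) ≤ 2 * (δ/2) ^ (-β) * ((δ/2) ^ (1-β)/(1-β)) := by
    calc (∫ r in m..1, F r) ≤ ∫ r in m..1, G2 r :=
          intervalIntegral.integral_mono_on hm1.le hFm2 hG2int hb2
      _ = 2 * (δ/2) ^ (-β) * ∫ r in m..1, (1 - r) ^ (-β) := by
          rw [hG2def, intervalIntegral.integral_const_mul]
      _ = 2 * (δ/2) ^ (-β) * ((δ/2) ^ (1-β)/(1-β)) := by rw [hJ2]
  have hsplit : (∫ r in v..1, F r) = (∫ r in v..m, F r) + ∫ r in m..1, F r :=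
    (intervalIntegral.integral_add_adjacent_intervals hFm1 hFm2).symm
  -- final arithmetic
  have hF1 : (δ/2) ^ (1-β) ≤ ε ^ (1-β) :=
    Real.rpow_le_rpow hδ2.le (by rw [hδdef]; linarith) h1β.le
  have hF2 : (δ/2) ^ (-β) ≤ 4 * (1 - v ^ α) ^ (-β) := by
    have hub : 1 - v ^ α ≤ 2 * δ := by
      rw [hδdef]; exact aux_one_sub_rpow_upper hα1 hα2 hv0' hv2.le
    have hq : (1 - v ^ α)/4 ≤ δ/2 := by linarith
    have hq0 : 0 < (1 - v ^ α)/4 := by linarith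
    calc (δ/2) ^ (-β) ≤ ((1 - v ^ α)/4) ^ (-β) :=
          Real.rpow_le_rpow_of_nonpos hq0 hq (by linarith)
      _ = (1 - v ^ α) ^ (-β) / 4 ^ (-β) :=
          Real.div_rpow h1vα.le (by norm_num) _
      _ = (1 - v ^ α) ^ (-β) * 4 ^ β := by
          rw [Real.rpow_neg (by norm_num : (0:ℝ) ≤ 4), div_eq_mul_inv, inv_inv]
      _ ≤ (1 - v ^ α) ^ (-β) * 4 := by
          have h4β : (4:ℝ) ^ β ≤ 4 := by
            have := Real.rpow_le_rpow_of_exponent_le (by norm_num : (1:ℝ) ≤ 4) hβ1.le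
            rwa [Real.rpow_one] at this
          exact mul_le_mul_of_nonneg_left h4β (Real.rpow_nonneg h1vα.le _)
      _ = 4 * (1 - v ^ α) ^ (-β) := by ring
  rw [hioo, hsplit, hexp]
  calc (∫ r in v..m, F r) + (∫ r in m..1, F r)
      ≤ 4 * (δ/2) ^ (-β) * ((δ/2) ^ (1-β)/(1-β)) := by linarith
    _ = (4/(1-β)) * ((δ/2) ^ (-β) * (δ/2) ^ (1-β)) := by ring
    _ ≤ (4/(1-β)) * ((4 * (1 - v ^ α) ^ (-β)) * ε ^ (1-β)) := by
        apply mul_le_mul_of_nonneg_left _ (by positivity)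
        exact mul_le_mul hF2 hF1 (Real.rpow_nonneg hδ2.le _)
          (by positivity)
    _ = 16/(1-β) * ε ^ (1-β) * (1 - v ^ α) ^ (-β) := by ring
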